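/- arXiv:1312.6255 — 3 statements merged into one kernel-verified Lean document; each statement's English description precedes it below -/
import Mathlib

section
/- In GL(2, F3), every cyclic subgroup of order 4 is contained in exactly one subgroup isomorphic to the dihedral group of order 8. -/
open Subgroup

private theorem dihedral_closure {α : Type*} [Group α] {g t : α}
    (h4 : orderOf g = 4) (ht2 : t * t = 1) (ht1 : t ≠ 1) (hrel : t * g * t⁻¹ = g⁻¹) :
    Nat.card (Subgroup.closure ({g, t} : Set α)) = 8 ∧
      Nonempty ((Subgroup.closure ({g, t} : Set α)) ≃* DihedralGroup 4) := by
  have hg4 : g ^ 4 = 1 := by rw [← h4]; exact pow_orderOf_eq_one g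
  have hg2 : g ^ 2 ≠ 1 := by
    intro h
    have h' := orderOf_dvd_of_pow_eq_one h
    rw [h4] at h'
    exact absurd h' (by norm_num)
  have htinv : t⁻¹ = t := inv_eq_of_mul_eq_one_right ht2
  have hcomm : ∀ k : ℕ, t * g ^ k = (g ^ k)⁻¹ * t := by
    intro k
    have h1 : t * g ^ k * t⁻¹ = (g ^ k)⁻¹ := by rw [← conj_pow, hrel, inv_pow]
    rw [← h1]; group
  have hcomm' : ∀ k : ℕ, g ^ k * t = t * (g ^ k)⁻¹ := by
    intro k
    apply mul_right_cancel (b := g ^ k)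
    rw [mul_assoc, mul_assoc, hcomm k, ← mul_assoc, mul_inv_cancel, inv_mul_cancel, one_mul,
      mul_one]
  have hts : ∀ a : ℕ, t * g ^ a * t = (g ^ a)⁻¹ := by
    intro a
    rw [mul_assoc, hcomm', ← mul_assoc, ht2, one_mul]
  have hswap : ∀ a b : ℕ, g ^ a * (g ^ b)⁻¹ = (g ^ b)⁻¹ * g ^ a := fun a b =>
    ((Commute.refl g).pow_pow a b).inv_right.eq
  have hmod : ∀ a : ℕ, g ^ (a % 4) = g ^ a := by
    intro a
    conv_rhs => rw [← Nat.div_add_mod a 4]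
    rw [pow_add, pow_mul, hg4, one_pow, one_mul]
  have hpowadd : ∀ i j : ZMod 4, g ^ (i + j).val = g ^ i.val * g ^ j.val := by
    intro i j
    rw [ZMod.val_add, hmod, pow_add]
  have hpowsub : ∀ i j : ZMod 4, g ^ (j - i).val = g ^ j.val * (g ^ i.val)⁻¹ := by
    intro i j
    have h := hpowadd (j - i) i
    rw [sub_add_cancel] at h
    rw [h, mul_assoc, mul_inv_cancel, mul_one]
  let f : DihedralGroup 4 →* α := MonoidHom.mk'
    (fun x => match x with
      | .r i => g ^ i.val
      | .sr i => t * g ^ i.val)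
    (by
      rintro (i | i) (j | j)
      · exact hpowadd i j
      · show t * g ^ (j - i).val = g ^ i.val * (t * g ^ j.val)
        calc t * g ^ (j - i).val
            = t * (g ^ j.val * (g ^ i.val)⁻¹) := by rw [hpowsub]
          _ = t * ((g ^ i.val)⁻¹ * g ^ j.val) := by rw [hswap]
          _ = t * (g ^ i.val)⁻¹ * g ^ j.val := by rw [mul_assoc]
          _ = g ^ i.val * t * g ^ j.val := by rw [hcomm']
          _ = g ^ i.val * (t * g ^ j.val) := by rw [mul_assoc]
      · show t * g ^ (i + j).val = t * g ^ i.val * g ^ j.val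
        rw [hpowadd, mul_assoc]
      · show g ^ (j - i).val = t * g ^ i.val * (t * g ^ j.val)
        rw [hpowsub, ← mul_assoc, hts, hswap])
  have hfr : ∀ i : ZMod 4, f (.r i) = g ^ i.val := fun _ => rfl
  have hfsr : ∀ i : ZMod 4, f (.sr i) = t * g ^ i.val := fun _ => rfl
  have hinj : Function.Injective f := by
    rw [injective_iff_map_eq_one]
    rintro (i | i) h
    · rw [hfr] at h
      have hdvd := orderOf_dvd_of_pow_eq_one h
      rw [h4] at hdvd
      have h0 : i.val = 0 := Nat.eq_zero_of_dvd_of_lt hdvd i.val_lt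
      rw [DihedralGroup.one_def]
      exact congrArg DihedralGroup.r ((ZMod.val_eq_zero i).mp h0)
    · rw [hfsr] at h
      exfalso
      have ht' : t = (g ^ i.val)⁻¹ := by
        rw [eq_inv_iff_mul_eq_one]; exact h
      have hcon : g = g⁻¹ := by
        have h2 : (g ^ i.val)⁻¹ * g * ((g ^ i.val)⁻¹)⁻¹ = g := by group
        rw [ht'] at hrel
        rw [← hrel]
        exact h2.symm
      apply hg2
      rw [pow_two]
      nth_rewrite 2 [hcon]
      exact mul_inv_cancel g
  have hrange : f.range = Subgroup.closure ({g, t} : Set α) := by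
    apply le_antisymm
    · rintro x ⟨y, rfl⟩
      have hgmem : g ∈ Subgroup.closure ({g, t} : Set α) :=
        Subgroup.subset_closure (Set.mem_insert g {t})
      have htmem : t ∈ Subgroup.closure ({g, t} : Set α) :=
        Subgroup.subset_closure (Set.mem_insert_of_mem g rfl)
      rcases y with i | i
      · exact pow_mem hgmem i.val
      · exact mul_mem htmem (pow_mem hgmem i.val)
    · rw [Subgroup.closure_le]
      rintro x (rfl | rfl)
      · exact ⟨.r 1, by rw [hfr, show ((1 : ZMod 4)).val = 1 from rfl, pow_one]⟩
      · exact ⟨.sr 0, by rw [hfsr, ZMod.val_zero, pow_zero, mul_one]⟩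
  have e2 : (Subgroup.closure ({g, t} : Set α)) ≃* DihedralGroup 4 :=
    (((MonoidHom.ofInjective hinj).trans (MulEquiv.subgroupCongr hrange))).symm
  constructor
  · rw [Nat.card_congr e2.toEquiv, Nat.card_eq_fintype_card, DihedralGroup.card]
  · exact ⟨e2⟩

set_option maxRecDepth 100000

private abbrev Mt := Matrix (Fin 2) (Fin 2) (ZMod 3)

private theorem mat_ord4 : ∀ m : Mt, m^4 = 1 → m^2 ≠ 1 →
    m = !![0,1;2,0] ∨ m = !![0,2;1,0] ∨ m = !![1,1;1,2] ∨
    m = !![1,2;2,2] ∨ m = !![2,1;1,1] ∨ m = !![2,2;2,1] := by decide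

private theorem mat_refl1 : ∀ t : Mt, t*t = 1 → t ≠ 1 → t * (!![0,1;2,0]) * t = (!![0,1;2,0])^3 →
    t = !![0,1;1,0] ∨ t = !![0,2;2,0] ∨ t = !![1,0;0,2] ∨ t = !![2,0;0,1] := by decide
private theorem mat_refl2 : ∀ t : Mt, t*t = 1 → t ≠ 1 → t * (!![0,2;1,0]) * t = (!![0,2;1,0])^3 →
    t = !![0,1;1,0] ∨ t = !![0,2;2,0] ∨ t = !![1,0;0,2] ∨ t = !![2,0;0,1] := by decide
private theorem mat_refl3 : ∀ t : Mt, t*t = 1 → t ≠ 1 → t * (!![1,1;1,2]) * t = (!![1,1;1,2])^3 →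
    t = !![1,0;1,2] ∨ t = !![1,1;0,2] ∨ t = !![2,0;2,1] ∨ t = !![2,2;0,1] := by decide
private theorem mat_refl4 : ∀ t : Mt, t*t = 1 → t ≠ 1 → t * (!![1,2;2,2]) * t = (!![1,2;2,2])^3 →
    t = !![1,0;2,2] ∨ t = !![1,2;0,2] ∨ t = !![2,0;1,1] ∨ t = !![2,1;0,1] := by decide
private theorem mat_refl5 : ∀ t : Mt, t*t = 1 → t ≠ 1 → t * (!![2,1;1,1]) * t = (!![2,1;1,1])^3 →
    t = !![1,0;2,2] ∨ t = !![1,2;0,2] ∨ t = !![2,0;1,1] ∨ t = !![2,1;0,1] := by decide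
private theorem mat_refl6 : ∀ t : Mt, t*t = 1 → t ≠ 1 → t * (!![2,2;2,1]) * t = (!![2,2;2,1])^3 →
    t = !![1,0;1,2] ∨ t = !![1,1;0,2] ∨ t = !![2,0;2,1] ∨ t = !![2,2;0,1] := by decide

private theorem mat_exists : ∀ m : Mt, m^4 = 1 → m^2 ≠ 1 →
    ∃ t : Mt, t*t = 1 ∧ t ≠ 1 ∧ t*m*t = m^3 := by decide

private theorem mat_rel : ∀ m t₁ t₂ : Mt, m^4 = 1 → m^2 ≠ 1 →
    t₁*t₁ = 1 → t₁ ≠ 1 → t₁*m*t₁ = m^3 → t₂*t₂ = 1 → t₂ ≠ 1 → t₂*m*t₂ = m^3 →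
    t₂ = t₁ ∨ t₂ = m*t₁ ∨ t₂ = m^2*t₁ ∨ t₂ = m^3*t₁ := by
  intro m t₁ t₂ hm4 hm2 ha hb hc hd he hf
  rcases mat_ord4 m hm4 hm2 with rfl|rfl|rfl|rfl|rfl|rfl
  · rcases mat_refl1 t₁ ha hb hc with rfl|rfl|rfl|rfl <;>
      rcases mat_refl1 t₂ hd he hf with rfl|rfl|rfl|rfl <;> decide
  · rcases mat_refl2 t₁ ha hb hc with rfl|rfl|rfl|rfl <;>
      rcases mat_refl2 t₂ hd he hf with rfl|rfl|rfl|rfl <;> decide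
  · rcases mat_refl3 t₁ ha hb hc with rfl|rfl|rfl|rfl <;>
      rcases mat_refl3 t₂ hd he hf with rfl|rfl|rfl|rfl <;> decide
  · rcases mat_refl4 t₁ ha hb hc with rfl|rfl|rfl|rfl <;>
      rcases mat_refl4 t₂ hd he hf with rfl|rfl|rfl|rfl <;> decide
  · rcases mat_refl5 t₁ ha hb hc with rfl|rfl|rfl|rfl <;>
      rcases mat_refl5 t₂ hd he hf with rfl|rfl|rfl|rfl <;> decide
  · rcases mat_refl6 t₁ ha hb hc with rfl|rfl|rfl|rfl <;>
      rcases mat_refl6 t₂ hd he hf with rfl|rfl|rfl|rfl <;> decide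

private theorem d8_exists : ∀ x : DihedralGroup 4, x^4 = 1 → x^2 ≠ 1 →
    ∃ y : DihedralGroup 4, y*y = 1 ∧ y ≠ 1 ∧ y*x*y⁻¹ = x⁻¹ := by decide

private abbrev Gl := GL (Fin 2) (ZMod 3)

private theorem unit_inv_eq_cube {g : Gl} (h : g ^ 4 = 1) : g⁻¹ = g ^ 3 :=
  inv_eq_of_mul_eq_one_right (by rw [← pow_succ', h])

/-- Lift a unit-level "reflection" condition to the matrix level. -/
private theorem refl_to_mat {g t : Gl} (h4 : g ^ 4 = 1) (ht2 : t * t = 1) (hrel : t * g * t⁻¹ = g⁻¹) :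
    t.val * t.val = 1 ∧ t.val * g.val * t.val = g.val ^ 3 := by
  have htinv : t⁻¹ = t := inv_eq_of_mul_eq_one_right ht2
  have h1 : t.val * t.val = 1 := by rw [← Units.val_mul, ht2, Units.val_one]
  refine ⟨h1, ?_⟩
  have h2 : t * g * t = g ^ 3 := by
    nth_rewrite 2 [← htinv]
    rw [hrel, unit_inv_eq_cube h4]
  calc t.val * g.val * t.val = (t * g * t).val := by rw [Units.val_mul, Units.val_mul]
    _ = g.val ^ 3 := by rw [h2, Units.val_pow_eq_pow_val]

private theorem gl_exists_refl (g : Gl) (h4 : g ^ 4 = 1) (h2 : g ^ 2 ≠ 1) :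
    ∃ t : Gl, t * t = 1 ∧ t ≠ 1 ∧ t * g * t⁻¹ = g⁻¹ := by
  have hm4 : g.val ^ 4 = 1 := by rw [← Units.val_pow_eq_pow_val, h4, Units.val_one]
  have hm2 : g.val ^ 2 ≠ 1 := fun hm =>
    h2 (Units.ext (by rw [Units.val_pow_eq_pow_val, hm, Units.val_one]))
  obtain ⟨t, ht1, ht2, ht3⟩ := mat_exists _ hm4 hm2
  refine ⟨⟨t, t, ht1, ht1⟩, Units.ext ht1, fun h => ht2 (congrArg Units.val h), ?_⟩
  have htinv : (⟨t, t, ht1, ht1⟩ : Gl)⁻¹ = ⟨t, t, ht1, ht1⟩ := inv_eq_of_mul_eq_one_right (Units.ext ht1)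
  rw [htinv, unit_inv_eq_cube h4]
  exact Units.ext (by
    show t * ↑g * t = ↑(g ^ 3)
    rw [ht3, Units.val_pow_eq_pow_val])

private theorem gl_refl_rel {g t₁ t₂ : Gl} (h4 : g ^ 4 = 1) (h2 : g ^ 2 ≠ 1)
    (ha : t₁ * t₁ = 1) (hb : t₁ ≠ 1) (hc : t₁ * g * t₁⁻¹ = g⁻¹)
    (hd : t₂ * t₂ = 1) (he : t₂ ≠ 1) (hf : t₂ * g * t₂⁻¹ = g⁻¹) :
    t₂ = t₁ ∨ t₂ = g * t₁ ∨ t₂ = g ^ 2 * t₁ ∨ t₂ = g ^ 3 * t₁ := by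
  have hm4 : g.val ^ 4 = 1 := by rw [← Units.val_pow_eq_pow_val, h4, Units.val_one]
  have hm2 : g.val ^ 2 ≠ 1 := fun hm =>
    h2 (Units.ext (by rw [Units.val_pow_eq_pow_val, hm, Units.val_one]))
  obtain ⟨ha', hc'⟩ := refl_to_mat h4 ha hc
  obtain ⟨hd', hf'⟩ := refl_to_mat h4 hd hf
  have hb' : t₁.val ≠ 1 := fun h => hb (Units.ext (h.trans Units.val_one.symm))
  have he' : t₂.val ≠ 1 := fun h => he (Units.ext (h.trans Units.val_one.symm))
  rcases mat_rel _ _ _ hm4 hm2 ha' hb' hc' hd' he' hf' with h | h | h | h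
  · exact Or.inl (Units.ext h)
  · exact Or.inr (Or.inl (Units.ext (by rw [Units.val_mul]; exact h)))
  · refine Or.inr (Or.inr (Or.inl (Units.ext ?_)))
    rw [Units.val_mul, Units.val_pow_eq_pow_val]; exact h
  · refine Or.inr (Or.inr (Or.inr (Units.ext ?_)))
    rw [Units.val_mul, Units.val_pow_eq_pow_val]; exact h

private theorem closure_le_closure {α : Type*} [Group α] {g t₁ t₂ : α}
    (hd : t₂ = t₁ ∨ t₂ = g * t₁ ∨ t₂ = g ^ 2 * t₁ ∨ t₂ = g ^ 3 * t₁) :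
    Subgroup.closure ({g, t₂} : Set α) ≤ Subgroup.closure ({g, t₁} : Set α) := by
  have hgmem : g ∈ Subgroup.closure ({g, t₁} : Set α) :=
    Subgroup.subset_closure (Set.mem_insert g {t₁})
  have htmem : t₁ ∈ Subgroup.closure ({g, t₁} : Set α) :=
    Subgroup.subset_closure (Set.mem_insert_of_mem g rfl)
  rw [Subgroup.closure_le]
  rintro x (rfl | rfl)
  · exact hgmem
  · rcases hd with rfl | rfl | rfl | rfl
    · exact htmem
    · exact mul_mem hgmem htmem
    · exact mul_mem (pow_mem hgmem 2) htmem
    · exact mul_mem (pow_mem hgmem 3) htmem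

/-- In `GL(2, F₃)`, every cyclic subgroup of order 4 is contained in exactly one
subgroup isomorphic to the dihedral group of order 8. -/
theorem stmt_1 (C : Subgroup (GL (Fin 2) (ZMod 3))) (hC : IsCyclic C) (hC4 : Nat.card C = 4) :
    ∃! H : Subgroup (GL (Fin 2) (ZMod 3)),
      C ≤ H ∧ Nonempty (H ≃* DihedralGroup 4) := by
  obtain ⟨gc, hgc⟩ := hC.exists_generator
  have horderc : orderOf gc = 4 := by
    rw [orderOf_eq_card_of_forall_mem_zpowers hgc, hC4]
  set g : Gl := (gc : Gl) with hgdef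
  have horder : orderOf g = 4 := by
    rw [Subgroup.orderOf_coe, horderc]
  have hg4 : g ^ 4 = 1 := by rw [← horder]; exact pow_orderOf_eq_one g
  have hg2 : g ^ 2 ≠ 1 := by
    intro h
    have h' := orderOf_dvd_of_pow_eq_one h
    rw [horder] at h'
    exact absurd h' (by norm_num)
  have hCz : C = Subgroup.zpowers g := by
    apply le_antisymm
    · intro x hx
      obtain ⟨k, hk⟩ := Subgroup.mem_zpowers_iff.mp (hgc ⟨x, hx⟩)
      exact Subgroup.mem_zpowers_iff.mpr ⟨k, by
        have := congrArg (Subtype.val) hk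
        rwa [SubgroupClass.coe_zpow] at this⟩
    · exact Subgroup.zpowers_le.mpr gc.2
  obtain ⟨t₀, ht₀2, ht₀1, ht₀rel⟩ := gl_exists_refl g hg4 hg2
  obtain ⟨hcard₀, ⟨e₀⟩⟩ := dihedral_closure horder ht₀2 ht₀1 ht₀rel
  refine ⟨Subgroup.closure ({g, t₀} : Set Gl), ⟨?_, ⟨e₀⟩⟩, ?_⟩
  · rw [hCz]
    exact Subgroup.zpowers_le.mpr (Subgroup.subset_closure (Set.mem_insert g {t₀}))
  · rintro H' ⟨hle, ⟨φ⟩⟩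
    -- g as an element of H'
    have hgH' : g ∈ H' := hle gc.2
    set gH : H' := ⟨g, hgH'⟩ with hgHdef
    have hgH4 : gH ^ 4 = 1 := by
      apply Subtype.ext
      rw [SubmonoidClass.coe_pow]
      exact hg4
    have hgH2 : gH ^ 2 ≠ 1 := by
      intro h
      apply hg2
      have := congrArg Subtype.val h
      rwa [SubmonoidClass.coe_pow] at this
    have hx4 : φ gH ^ 4 = 1 := by rw [← map_pow, hgH4, map_one]
    have hx2 : φ gH ^ 2 ≠ 1 := by
      intro h
      apply hgH2
      apply φ.injective
      rw [map_pow, h, map_one]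
    obtain ⟨y, hy2, hy1, hyrel⟩ := d8_exists (φ gH) hx4 hx2
    set tH : H' := φ.symm y with htHdef
    have htH2 : tH * tH = 1 := by
      rw [htHdef, ← map_mul, hy2, map_one]
    have htH1 : tH ≠ 1 := by
      intro h
      apply hy1
      have := congrArg φ h
      rwa [map_one, MulEquiv.apply_symm_apply] at this
    have htHrel : tH * gH * tH⁻¹ = gH⁻¹ := by
      apply φ.injective
      rw [map_mul, map_mul, map_inv, map_inv, MulEquiv.apply_symm_apply]
      exact hyrel
    set t : Gl := (tH : Gl) with htdef
    have ht2 : t * t = 1 := by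
      rw [htdef, ← Subgroup.coe_mul, htH2, Subgroup.coe_one]
    have ht1 : t ≠ 1 := by
      intro h
      exact htH1 (Subtype.ext (h.trans (Subgroup.coe_one H').symm))
    have htrel : t * g * t⁻¹ = g⁻¹ := by
      have := congrArg Subtype.val htHrel
      rwa [Subgroup.coe_mul, Subgroup.coe_mul, Subgroup.coe_inv, Subgroup.coe_inv] at this
    -- H' equals closure {g, t}
    obtain ⟨hcard, -⟩ := dihedral_closure horder ht2 ht1 htrel
    have hsub : Subgroup.closure ({g, t} : Set Gl) ≤ H' := by
      rw [Subgroup.closure_le]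
      rintro x (rfl | rfl)
      · exact hgH'
      · exact tH.2
    have hH'card : Nat.card H' = 8 := by
      rw [Nat.card_congr φ.toEquiv, Nat.card_eq_fintype_card, DihedralGroup.card]
    have hH'eq : Subgroup.closure ({g, t} : Set Gl) = H' :=
      Subgroup.eq_of_le_of_card_ge hsub (by rw [hH'card, hcard])
    rw [← hH'eq]
    exact le_antisymm
      (closure_le_closure (gl_refl_rel hg4 hg2 ht₀2 ht₀1 ht₀rel ht2 ht1 htrel))
      (closure_le_closure (gl_refl_rel hg4 hg2 ht2 ht1 htrel ht₀2 ht₀1 ht₀rel))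
end

section
/- Let C be a cyclic subgroup of order 4 of GL(2, F3), and let H be a subgroup of GL(2, F3) isomorphic to the dihedral group of order 8 containing C. Then any two elements of H \ C are conjugate in GL(2, F3) by an element that centralises C. -/
set_option maxRecDepth 40000
set_option maxHeartbeats 1000000
set_option synthInstance.maxHeartbeats 200000

private lemma MKEY : ∀ A : Matrix (Fin 2) (Fin 2) (ZMod 3), A ^ 4 = 1 → A ^ 2 = 1 ∨ A ^ 2 = -1 := by
  decide

private lemma D4KEY : ∀ d : DihedralGroup 4, (∀ y, y * d = d * y) → d * d = 1 := by decide

private lemma Mneg : (-1 : Matrix (Fin 2) (Fin 2) (ZMod 3)) - 1 = 1 := by decide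

/-- Let `C` be a cyclic subgroup of order 4 of `GL(2, F₃)` and `H ⊇ C` a subgroup
isomorphic to the dihedral group of order 8.  Then any two elements of `H \ C` are
conjugate in `GL(2, F₃)` by an element centralising `C`. -/
theorem stmt_2 (C H : Subgroup (GL (Fin 2) (ZMod 3))) (hC : IsCyclic C) (hC4 : Nat.card C = 4)
    (hCH : C ≤ H) (hH : Nonempty (H ≃* DihedralGroup 4))
    (g h : GL (Fin 2) (ZMod 3)) (hg : g ∈ (H : Set _) \ (C : Set _))
    (hh : h ∈ (H : Set _) \ (C : Set _)) :
    ∃ x : GL (Fin 2) (ZMod 3), (∀ c ∈ C, x * c = c * x) ∧ x * g * x⁻¹ = h := by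
  obtain ⟨φ⟩ := hH
  obtain ⟨a0, ha0⟩ := hC.exists_generator
  set a : GL (Fin 2) (ZMod 3) := (a0 : GL (Fin 2) (ZMod 3)) with ha_def
  have haC : a ∈ C := a0.2
  -- cardinality of H
  have hH8 : Nat.card H = 8 := by
    rw [Nat.card_congr φ.toEquiv, Nat.card_eq_fintype_card, DihedralGroup.card]
  -- order of a
  have horder0 : orderOf a0 = 4 := by
    have htop : Subgroup.zpowers a0 = ⊤ := by
      rw [Subgroup.eq_top_iff']; exact ha0
    rw [← Nat.card_zpowers, htop, Subgroup.card_top, hC4]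
  have horder : orderOf a = 4 :=
    (orderOf_injective C.subtype C.subtype_injective a0).trans horder0
  have ha4 : a ^ 4 = 1 := by rw [← horder]; exact pow_orderOf_eq_one a
  have ha2 : a ^ 2 ≠ 1 := by
    intro hcon
    have := orderOf_dvd_of_pow_eq_one hcon
    rw [horder] at this; omega
  -- C = zpowers a
  have hCz : C = Subgroup.zpowers a := by
    apply le_antisymm
    · intro x hx
      obtain ⟨n, hn⟩ := ha0 ⟨x, hx⟩
      refine ⟨n, ?_⟩
      have := congrArg (C.subtype) hn
      simpa [map_zpow] using this
    · exact Subgroup.zpowers_le.mpr haC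
  -- elements of C are powers a^k, k < 4
  have hmemC : ∀ b : GL (Fin 2) (ZMod 3), b ∈ C → ∃ k : ℕ, k < 4 ∧ b = a ^ k := by
    intro b hb
    rw [hCz] at hb
    obtain ⟨n, hn⟩ := hb
    have hn' : a ^ n = b := hn
    refine ⟨(n % 4).toNat, by omega, ?_⟩
    have h1 : a ^ (n % (4 : ℤ)) = a ^ n := by
      have := zpow_mod_orderOf a n
      rwa [horder] at this
    have h2 : a ^ (((n % 4).toNat : ℤ)) = a ^ (n % (4 : ℤ)) := by
      congr 1
      omega
    rw [← hn', ← h1, ← h2, zpow_natCast]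
  -- key: any element of H commuting with a lies in C
  have KEY : ∀ b : GL (Fin 2) (ZMod 3), b ∈ H → b * a = a * b → b ∈ C := by
    intro b hbH hbcomm
    by_contra hbC
    set Z := Subgroup.centralizer {a} with hZ_def
    have haZ : a ∈ Z := Subgroup.mem_centralizer_iff.mpr (by rintro y rfl; rfl)
    have hCW : C ≤ Z ⊓ H := by
      refine le_inf ?_ hCH
      rw [hCz]
      exact Subgroup.zpowers_le.mpr haZ
    have hbW : b ∈ Z ⊓ H := by
      refine ⟨Subgroup.mem_centralizer_iff.mpr ?_, hbH⟩
      rintro y rfl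
      exact hbcomm.symm
    have d1 : Nat.card (Z ⊓ H : Subgroup _) ∣ 8 := hH8 ▸ Subgroup.card_dvd_of_le inf_le_right
    have d2 : 4 ∣ Nat.card (Z ⊓ H : Subgroup _) := hC4 ▸ Subgroup.card_dvd_of_le hCW
    have hcardW : Nat.card (Z ⊓ H : Subgroup _) = 4 ∨ Nat.card (Z ⊓ H : Subgroup _) = 8 := by
      have hle : Nat.card (Z ⊓ H : Subgroup _) ≤ 8 := Nat.le_of_dvd (by norm_num) d1
      have hne : Nonempty (Z ⊓ H : Subgroup _) := ⟨1⟩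
      have hge : 4 ≤ Nat.card (Z ⊓ H : Subgroup _) :=
        Nat.le_of_dvd Nat.card_pos d2
      set m := Nat.card (Z ⊓ H : Subgroup _)
      interval_cases m <;> omega
    rcases hcardW with hc4 | hc8
    · have : C = Z ⊓ H := Subgroup.eq_of_le_of_card_ge hCW (by omega)
      exact hbC (this ▸ hbW)
    · have hWH : Z ⊓ H = H := Subgroup.eq_of_le_of_card_ge inf_le_right (by omega)
      have hHZ : ∀ y : H, (y : GL (Fin 2) (ZMod 3)) * a = a * (y : GL (Fin 2) (ZMod 3)) := by
        intro y
        have : (y : GL (Fin 2) (ZMod 3)) ∈ Z ⊓ H := hWH.symm ▸ y.2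
        exact (Subgroup.mem_centralizer_iff.mp this.1 a rfl).symm
      set a' : H := ⟨a, hCH haC⟩ with ha'_def
      have hcen : ∀ y : DihedralGroup 4, y * φ a' = φ a' * y := by
        intro y
        obtain ⟨x, rfl⟩ := φ.surjective y
        rw [← map_mul, ← map_mul]
        exact congrArg φ (Subtype.ext (hHZ x))
      have := D4KEY (φ a') hcen
      rw [← map_mul, ← map_one φ] at this
      have := φ.injective this
      have : a * a = 1 := congrArg Subtype.val this
      exact ha2 (by rwa [pow_two])
  -- any element of H \ C inverts a
  have C' := C.subgroupOf H
  have hC'4 : Nat.card (C.subgroupOf H) = 4 := by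
    rw [Nat.card_congr (Subgroup.subgroupOfEquivOfLe hCH).toEquiv, hC4]
  have hidx : (C.subgroupOf H).index = 2 := by
    have := Subgroup.card_mul_index (C.subgroupOf H)
    rw [hC'4, hH8] at this
    omega
  have conj_inv : ∀ w : GL (Fin 2) (ZMod 3), w ∈ H → w ∉ C → w * a * w⁻¹ = a⁻¹ := by
    intro w hwH hwC
    set w' : H := ⟨w, hwH⟩ with hw'_def
    set a' : H := ⟨a, hCH haC⟩ with ha'_def
    have hw'C : w' ∉ C.subgroupOf H := by
      simpa [Subgroup.mem_subgroupOf] using hwC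
    have ha'C : a' ∈ C.subgroupOf H := by
      simpa [Subgroup.mem_subgroupOf] using haC
    have hclaim : w' * a' * w'⁻¹ ∈ C.subgroupOf H := by
      by_contra hx
      have h1 : (w' * a' * w'⁻¹) * w' ∈ C.subgroupOf H :=
        (Subgroup.mul_mem_iff_of_index_two hidx).mpr (iff_of_false hx hw'C)
      rw [inv_mul_cancel_right] at h1
      have h2 := (Subgroup.mul_mem_iff_of_index_two hidx).mp h1
      exact hw'C (h2.mpr ha'C)
    have hmem : w * a * w⁻¹ ∈ C := by
      have := hclaim
      rw [Subgroup.mem_subgroupOf] at this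
      simpa using this
    obtain ⟨k, hk4, hk⟩ := hmemC _ hmem
    interval_cases k
    · -- w a w⁻¹ = 1 : impossible
      exfalso
      rw [pow_zero] at hk
      have : a = 1 := by
        have := congrArg (fun t => w⁻¹ * t * w) hk
        simpa [mul_assoc] using this
      exact ha2 (by rw [this, one_pow])
    · -- w a w⁻¹ = a : w commutes with a, so w ∈ C, contradiction
      exfalso
      rw [pow_one] at hk
      have hcomm : w * a = a * w := by
        have := congrArg (fun t => t * w) hk
        simpa [mul_assoc] using this
      exact hwC (KEY w hwH hcomm)
    · -- w a w⁻¹ = a² : then a² = 1, contradiction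
      exfalso
      have h4 : w * a ^ 2 * w⁻¹ = a ^ 4 := by
        calc w * a ^ 2 * w⁻¹ = (w * a * w⁻¹) * (w * a * w⁻¹) := by
              rw [pow_two]; group
        _ = a ^ 2 * a ^ 2 := by rw [hk]
        _ = a ^ 4 := by rw [← pow_add]
      rw [ha4] at h4
      have : a ^ 2 = 1 := by
        have := congrArg (fun t => w⁻¹ * t * w) h4
        simpa [mul_assoc] using this
      exact ha2 this
    · -- w a w⁻¹ = a³ = a⁻¹
      rw [hk]
      rw [eq_comm, inv_eq_iff_mul_eq_one, ← pow_succ']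
      exact ha4
  have hginv : g * a * g⁻¹ = a⁻¹ := conj_inv g hg.1 hg.2
  have hhinv : h * a * h⁻¹ = a⁻¹ := conj_inv h hh.1 hh.2
  -- h * g⁻¹ commutes with a, hence lies in C
  have hbcomm : (h * g⁻¹) * a = a * (h * g⁻¹) := by
    have h0 : g * a⁻¹ * g⁻¹ = a := by
      have := congrArg (fun t => t⁻¹) hginv
      simpa [mul_assoc] using this
    have h1 : g⁻¹ * a * g = a⁻¹ := by
      conv_lhs => rw [← h0]
      group
    have h2 : h * (g⁻¹ * a * g) * h⁻¹ = a := by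
      rw [h1]
      have := congrArg (fun t => t⁻¹) hhinv
      simpa [mul_assoc] using this
    calc (h * g⁻¹) * a = h * (g⁻¹ * a * g) * h⁻¹ * (h * g⁻¹) := by group
    _ = a * (h * g⁻¹) := by rw [h2]
  have hbC : h * g⁻¹ ∈ C := KEY (h * g⁻¹) (mul_mem hh.1 (inv_mem hg.1)) hbcomm
  obtain ⟨k, hk4, hk⟩ := hmemC _ hbC
  have hhk : h = a ^ k * g := by rw [← hk]; group
  -- the matrix a² = -1
  have haval4 : (a : Matrix (Fin 2) (Fin 2) (ZMod 3)) ^ 4 = 1 := by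
    rw [← Units.val_pow_eq_pow_val, ha4, Units.val_one]
  have haval2 : (a : Matrix (Fin 2) (Fin 2) (ZMod 3)) ^ 2 = -1 := by
    rcases MKEY _ haval4 with h1 | h1
    · exfalso
      apply ha2
      ext
      rw [Units.val_pow_eq_pow_val, h1, Units.val_one]
    · exact h1
  -- the unit u = 1 + a
  set A : Matrix (Fin 2) (Fin 2) (ZMod 3) := (a : Matrix (Fin 2) (Fin 2) (ZMod 3)) with hA_def
  have hu1 : (1 + A) * (A - 1) = 1 := by
    have : (1 + A) * (A - 1) = A ^ 2 - 1 := by noncomm_ring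
    rw [this, haval2, Mneg]
  have hu2 : (A - 1) * (1 + A) = 1 := by
    have : (A - 1) * (1 + A) = A ^ 2 - 1 := by noncomm_ring
    rw [this, haval2, Mneg]
  set u : GL (Fin 2) (ZMod 3) := ⟨1 + A, A - 1, hu1, hu2⟩ with hu_def
  -- u commutes with a
  have hua : Commute u a := by
    apply Units.ext
    show (1 + A) * A = A * (1 + A)
    noncomm_ring
  -- u conjugates g to a * g
  have hug : u * g = (a * g) * u := by
    have hga : g * a = a⁻¹ * g := by
      have := congrArg (fun t => t * g) hginv
      simpa [mul_assoc] using this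
    have haga : a * g * a = g := by
      rw [mul_assoc, hga, ← mul_assoc, mul_inv_cancel, one_mul]
    apply Units.ext
    have hval : A * (g : Matrix (Fin 2) (Fin 2) (ZMod 3)) * A
        = (g : Matrix (Fin 2) (Fin 2) (ZMod 3)) := by
      have := congrArg Units.val haga
      simpa [Units.val_mul] using this
    show (1 + A) * (g : Matrix (Fin 2) (Fin 2) (ZMod 3))
        = ((a * g : GL (Fin 2) (ZMod 3)) : Matrix (Fin 2) (Fin 2) (ZMod 3)) * (1 + A)
    rw [Units.val_mul]
    calc (1 + A) * (g : Matrix (Fin 2) (Fin 2) (ZMod 3))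
        = (g : Matrix (Fin 2) (Fin 2) (ZMod 3)) + A * g := by noncomm_ring
    _ = A * (g : Matrix (Fin 2) (Fin 2) (ZMod 3)) * A + A * g := by rw [hval]
    _ = (A * (g : Matrix (Fin 2) (Fin 2) (ZMod 3))) * (1 + A) := by noncomm_ring
  have hugc : u * g * u⁻¹ = a * g := by
    rw [hug]; group
  -- powers of u conjugate g to a^k * g
  have hpow : ∀ m : ℕ, u ^ m * g * (u ^ m)⁻¹ = a ^ m * g := by
    intro m
    induction m with
    | zero => simp
    | succ n ih =>
      have hcomm : u * a ^ n = a ^ n * u := (hua.pow_right n).eq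
      calc u ^ (n + 1) * g * (u ^ (n + 1))⁻¹
          = u * (u ^ n * g * (u ^ n)⁻¹) * u⁻¹ := by
            rw [pow_succ' u n]; group
      _ = u * (a ^ n * g) * u⁻¹ := by rw [ih]
      _ = a ^ n * (u * g * u⁻¹) := by
            rw [← mul_assoc, hcomm]; group
      _ = a ^ n * (a * g) := by rw [hugc]
      _ = a ^ (n + 1) * g := by rw [pow_succ']; group
  refine ⟨u ^ k, ?_, ?_⟩
  · intro c hcC
    rw [hCz] at hcC
    obtain ⟨n, hn⟩ := hcC
    rw [← hn]
    exact ((hua.pow_left k).zpow_right n).eq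
  · rw [hpow k, ← hhk]
end

section
/- The kernel of the natural map Q*/Q*⁴ → Q(i)*/Q(i)*⁴ (induced by the inclusion Q ⊂ Q(i)) is the cyclic subgroup of order 2 generated by the class of -4. -/
/-!
An element of `ℚ(i)` is `a + b i` with `a, b ∈ ℚ`, and
`(a + b i)⁴ = (a⁴ - 6a²b² + b⁴) + 4ab(a - b)(a + b) i`.
It is rational exactly when `a = 0`, `b = 0` or `a = ±b`, in which case it equals `b⁴`, `a⁴`
or `-4a⁴`; conversely `-4 = (1 + i)⁴`.
-/

open IntermediateField Complex

def gaussianRat : Subalgebra ℚ ℂ where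
  carrier := {z | ∃ a b : ℚ, z = a + b * I}
  mul_mem' := by
    rintro _ _ ⟨a, b, rfl⟩ ⟨c, d, rfl⟩
    exact ⟨a * c - b * d, a * d + b * c, by push_cast; linear_combination (b * d : ℂ) * I_sq⟩
  add_mem' := by
    rintro _ _ ⟨a, b, rfl⟩ ⟨c, d, rfl⟩
    exact ⟨a + c, b + d, by push_cast; ring⟩
  algebraMap_mem' r := ⟨r, 0, by simp⟩

theorem isIntegral_I : IsIntegral ℚ I :=
  ⟨Polynomial.X ^ 2 + 1, Polynomial.monic_X_pow_add_C 1 two_ne_zero, by simp⟩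

theorem exists_eq_add_mul_I_of_mem_adjoin_I {z : ℂ} (hz : z ∈ ℚ⟮I⟯) :
    ∃ a b : ℚ, z = a + b * I := by
  have hle : ℚ⟮I⟯.toSubalgebra ≤ gaussianRat := by
    rw [adjoin_simple_toSubalgebra_of_isAlgebraic isIntegral_I.isAlgebraic]
    exact Algebra.adjoin_le (Set.singleton_subset_iff.2 ⟨0, 1, by simp⟩)
  exact hle hz

theorem ratCast_add_ratCast_mul_I_eq_ratCast_iff {a b x : ℚ} :
    (a + b * I : ℂ) = x ↔ a = x ∧ b = 0 := by
  simp [Complex.ext_iff]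

theorem add_mul_I_pow_four (a b : ℚ) :
    (a + b * I : ℂ) ^ 4 =
      ((a ^ 4 - 6 * a ^ 2 * b ^ 2 + b ^ 4 : ℚ) + (4 * a * b * (a - b) * (a + b) : ℚ) * I : ℂ) := by
  push_cast
  linear_combination (6 * a ^ 2 * b ^ 2 + 4 * a * b ^ 3 * I + b ^ 4 * (I ^ 2 - 1) : ℂ) * I_sq

theorem one_add_I_pow_four : (1 + I) ^ 4 = -4 := by
  linear_combination (I ^ 2 + 4 * I + 5) * I_sq

theorem exists_eq_pow_four_or_eq_neg_four_mul_pow_four {R : Type*} [CommRing R] [IsDomain R]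
    [NeZero (4 : R)] {a b : R} (h : 4 * a * b * (a - b) * (a + b) = 0) :
    ∃ z : R, a ^ 4 - 6 * a ^ 2 * b ^ 2 + b ^ 4 = z ^ 4 ∨
      a ^ 4 - 6 * a ^ 2 * b ^ 2 + b ^ 4 = -4 * z ^ 4 := by
  simp only [mul_eq_zero, sub_eq_zero, add_eq_zero_iff_eq_neg, NeZero.ne, false_or] at h
  rcases h with ((rfl | rfl) | rfl) | rfl
  · exact ⟨b, .inl (by ring)⟩
  · exact ⟨a, .inl (by ring)⟩
  · exact ⟨a, .inr (by ring)⟩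
  · exact ⟨b, .inr (by ring)⟩

theorem neg_four_ne_pow_four {R : Type*} [Ring R] [LinearOrder R] [IsStrictOrderedRing R]
    (z : R) : -4 ≠ z ^ 4 :=
  ((neg_neg_of_pos four_pos).trans_le (Even.pow_nonneg ⟨2, rfl⟩ z)).ne

/-- The kernel of the natural map `ℚ*/ℚ*⁴ → ℚ(i)*/ℚ(i)*⁴` is the cyclic subgroup of
order 2 generated by the class of `-4`: a nonzero rational `x` becomes a fourth power
in `ℚ(i)` if and only if `x ∈ ℚ*⁴ ∪ (-4)·ℚ*⁴`, and `-4` is not a fourth power in `ℚ`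
(so this kernel indeed has order 2). -/
theorem stmt_3 :
    (∀ x : ℚ, x ≠ 0 →
      ((∃ y : ℚ⟮Complex.I⟯, (y : ℂ) ^ 4 = (x : ℂ)) ↔
        ∃ z : ℚ, x = z ^ 4 ∨ x = -4 * z ^ 4)) ∧
    ¬ ∃ z : ℚ, (-4 : ℚ) = z ^ 4 := by
  refine ⟨fun x _ ↦ ⟨?_, ?_⟩, fun ⟨z, hz⟩ ↦ neg_four_ne_pow_four z hz⟩
  · rintro ⟨y, hy⟩
    obtain ⟨a, b, hab⟩ := exists_eq_add_mul_I_of_mem_adjoin_I y.2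
    rw [hab, add_mul_I_pow_four, ratCast_add_ratCast_mul_I_eq_ratCast_iff] at hy
    obtain ⟨rfl, him⟩ := hy
    exact exists_eq_pow_four_or_eq_neg_four_mul_pow_four him
  · have hI : I ∈ ℚ⟮I⟯ := mem_adjoin_simple_self ℚ I
    rintro ⟨z, rfl | rfl⟩
    · exact ⟨z, by simp⟩
    · refine ⟨z * (1 + ⟨I, hI⟩), ?_⟩
      push_cast
      rw [mul_pow, one_add_I_pow_four]
      ring
end
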